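/- arXiv:2104.05205 — 3 statements merged into one kernel-verified Lean document; each statement's English description precedes it below -/
import Mathlib

section
/- For 1 < p ≤ 2 there is a constant C = C_p such that for all vectors x, y ∈ ℝ^N: 0 ≤ |x+y|^p - |x|^p - p|x|^{p-2} ⟨x, y⟩ ≤ C|y|^p, where |x|^{p-2}x is interpreted as 0 when x = 0. -/
/-! The lower bound is the tangent-line inequality for the convex function `t ↦ t ^ p` at
`t = ‖x‖`, combined with Cauchy–Schwarz `⟪x, y⟫ ≤ ‖x‖ (‖x + y‖ - ‖x‖)`.
For the upper bound when `‖y‖ ≤ ‖x‖`, write `‖x + y‖ ^ p = (‖x + y‖ ^ 2) ^ (p / 2)` and use the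
tangent line of the concave function `s ↦ s ^ (p / 2)` at `s = ‖x‖ ^ 2`: since
`‖x + y‖ ^ 2 = ‖x‖ ^ 2 + 2 ⟪x, y⟫ + ‖y‖ ^ 2`, the remainder is at most
`p / 2 ‖x‖ ^ (p - 2) ‖y‖ ^ 2 ≤ p / 2 ‖y‖ ^ p`. When `‖x‖ ≤ ‖y‖` each term is crudely `O(‖y‖ ^ p)`. -/

open Real

namespace Real

lemma rpow_add_mul_rpow_sub_one_mul_sub_le {p a u : ℝ} (hp : 1 ≤ p) (ha : 0 < a) (hu : 0 ≤ u) :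
    a ^ p + p * a ^ (p - 1) * (u - a) ≤ u ^ p := by
  have hbern := one_add_mul_self_le_rpow_one_add (s := u / a - 1)
    (by linarith [div_nonneg hu ha.le]) hp
  calc a ^ p + p * a ^ (p - 1) * (u - a) = a ^ p * (1 + p * (u / a - 1)) := by
        rw [rpow_sub_one ha.ne']; field_simp
    _ ≤ a ^ p * (1 + (u / a - 1)) ^ p := by gcongr
    _ = u ^ p := by
        rw [add_sub_cancel, ← mul_rpow ha.le (div_nonneg hu ha.le), mul_div_cancel₀ _ ha.ne']

lemma rpow_le_rpow_add_mul_rpow_sub_one_mul_sub {p a u : ℝ} (hp₀ : 0 ≤ p) (hp₁ : p ≤ 1)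
    (ha : 0 < a) (hu : 0 ≤ u) :
    u ^ p ≤ a ^ p + p * a ^ (p - 1) * (u - a) := by
  have hbern := rpow_one_add_le_one_add_mul_self (s := u / a - 1)
    (by linarith [div_nonneg hu ha.le]) hp₀ hp₁
  calc u ^ p = a ^ p * (1 + (u / a - 1)) ^ p := by
        rw [add_sub_cancel, ← mul_rpow ha.le (div_nonneg hu ha.le), mul_div_cancel₀ _ ha.ne']
    _ ≤ a ^ p * (1 + p * (u / a - 1)) := by gcongr
    _ = a ^ p + p * a ^ (p - 1) * (u - a) := by
        rw [rpow_sub_one ha.ne']; field_simp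

lemma sq_rpow_div_two {x : ℝ} (hx : 0 ≤ x) (y : ℝ) : (x ^ 2) ^ (y / 2) = x ^ y := by
  rw [← rpow_natCast_mul hx, Nat.cast_ofNat, mul_div_cancel₀ _ two_ne_zero]

end Real

section InnerProductSpace

variable {E : Type*} [NormedAddCommGroup E] [InnerProductSpace ℝ E]

lemma rpow_norm_add_mul_inner_le_rpow_norm_add {p : ℝ} (hp : 1 ≤ p) (x y : E) :
    ‖x‖ ^ p + p * ‖x‖ ^ (p - 2) * inner ℝ x y ≤ ‖x + y‖ ^ p := by
  rcases eq_or_ne x 0 with rfl | hx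
  · simpa [zero_rpow (by linarith : p ≠ 0)] using rpow_nonneg (norm_nonneg y) p
  have ha := norm_pos_iff.2 hx
  have hcs : inner ℝ x y ≤ ‖x‖ * (‖x + y‖ - ‖x‖) := by
    have := real_inner_le_norm x (x + y)
    rw [inner_add_right, real_inner_self_eq_norm_sq] at this
    linarith
  calc ‖x‖ ^ p + p * ‖x‖ ^ (p - 2) * inner ℝ x y
      ≤ ‖x‖ ^ p + p * ‖x‖ ^ (p - 2) * (‖x‖ * (‖x + y‖ - ‖x‖)) := by gcongr
    _ = ‖x‖ ^ p + p * ‖x‖ ^ (p - 1) * (‖x + y‖ - ‖x‖) := by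
        rw [show p - 1 = p - 2 + 1 by ring, rpow_add_one ha.ne']; ring
    _ ≤ ‖x + y‖ ^ p := rpow_add_mul_rpow_sub_one_mul_sub_le hp ha (norm_nonneg _)

lemma rpow_norm_add_sub_le_mul_rpow_sub_two_mul_sq {p : ℝ} (hp₀ : 0 ≤ p) (hp₂ : p ≤ 2)
    {x : E} (hx : x ≠ 0) (y : E) :
    ‖x + y‖ ^ p - ‖x‖ ^ p - p * ‖x‖ ^ (p - 2) * inner ℝ x y ≤
      p / 2 * ‖x‖ ^ (p - 2) * ‖y‖ ^ 2 := by
  have ha := norm_pos_iff.2 hx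
  have hconc := rpow_le_rpow_add_mul_rpow_sub_one_mul_sub (p := p / 2) (by linarith)
    (by linarith) (pow_pos ha 2) (sq_nonneg ‖x + y‖)
  rw [sq_rpow_div_two ha.le, sq_rpow_div_two (norm_nonneg _),
    show p / 2 - 1 = (p - 2) / 2 by ring, sq_rpow_div_two ha.le, norm_add_sq_real] at hconc
  linarith

lemma rpow_norm_add_sub_le_of_norm_le {p : ℝ} (hp₀ : 0 < p) (hp₂ : p ≤ 2) {x y : E}
    (hyx : ‖y‖ ≤ ‖x‖) :
    ‖x + y‖ ^ p - ‖x‖ ^ p - p * ‖x‖ ^ (p - 2) * inner ℝ x y ≤ p / 2 * ‖y‖ ^ p := by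
  rcases eq_or_ne y 0 with rfl | hy
  · simp [zero_rpow hp₀.ne']
  have hc := norm_pos_iff.2 hy
  calc ‖x + y‖ ^ p - ‖x‖ ^ p - p * ‖x‖ ^ (p - 2) * inner ℝ x y
      ≤ p / 2 * ‖x‖ ^ (p - 2) * ‖y‖ ^ 2 :=
        rpow_norm_add_sub_le_mul_rpow_sub_two_mul_sq hp₀.le hp₂
          (norm_pos_iff.1 (hc.trans_le hyx)) y
    _ ≤ p / 2 * ‖y‖ ^ (p - 2) * ‖y‖ ^ 2 := by
        have := rpow_le_rpow_of_nonpos hc hyx (show p - 2 ≤ 0 by linarith)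
        gcongr
    _ = p / 2 * ‖y‖ ^ p := by
        rw [mul_assoc, ← rpow_natCast, ← rpow_add hc]; norm_num

lemma rpow_norm_add_sub_le_of_le_norm {p : ℝ} (hp : 1 ≤ p) {x y : E} (hxy : ‖x‖ ≤ ‖y‖) :
    ‖x + y‖ ^ p - ‖x‖ ^ p - p * ‖x‖ ^ (p - 2) * inner ℝ x y ≤ (2 ^ p + p) * ‖y‖ ^ p := by
  rcases eq_or_ne x 0 with rfl | hx
  · have hc := rpow_nonneg (norm_nonneg y) p
    simp only [zero_add, norm_zero, zero_rpow (by linarith : p ≠ 0), inner_zero_left, mul_zero]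
    nlinarith [one_le_rpow (by norm_num : (1 : ℝ) ≤ 2) (by linarith : 0 ≤ p)]
  have ha := norm_pos_iff.2 hx
  have hc := ha.trans_le hxy
  have hsum : ‖x + y‖ ^ p ≤ 2 ^ p * ‖y‖ ^ p := calc
    ‖x + y‖ ^ p ≤ (2 * ‖y‖) ^ p :=
        rpow_le_rpow (norm_nonneg _) (by linarith [norm_add_le x y]) (by linarith)
    _ = 2 ^ p * ‖y‖ ^ p := mul_rpow zero_le_two hc.le
  have hinner : -(p * ‖x‖ ^ (p - 2) * inner ℝ x y) ≤ p * ‖y‖ ^ p := calc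
    -(p * ‖x‖ ^ (p - 2) * inner ℝ x y) ≤ p * ‖x‖ ^ (p - 2) * (‖x‖ * ‖y‖) := by
        rw [← mul_neg]; gcongr; exact (neg_le_abs _).trans (abs_real_inner_le_norm x y)
    _ = p * ‖x‖ ^ (p - 1) * ‖y‖ := by
        rw [show p - 1 = p - 2 + 1 by ring, rpow_add_one ha.ne']; ring
    _ ≤ p * ‖y‖ ^ (p - 1) * ‖y‖ := by gcongr
    _ = p * ‖y‖ ^ p := by rw [mul_assoc, ← rpow_add_one hc.ne', sub_add_cancel]
  linarith [rpow_nonneg ha.le p]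

end InnerProductSpace

theorem stmt_6_general (N : ℕ) (p : ℝ) (hp1 : 1 < p) (hp2 : p ≤ 2) :
    ∃ C : ℝ, 0 < C ∧ ∀ x y : EuclideanSpace ℝ (Fin N),
      0 ≤ ‖x + y‖ ^ p - ‖x‖ ^ p - p * ‖x‖ ^ (p - 2) * (inner ℝ x y : ℝ) ∧
      ‖x + y‖ ^ p - ‖x‖ ^ p - p * ‖x‖ ^ (p - 2) * (inner ℝ x y : ℝ) ≤ C * ‖y‖ ^ p := by
  refine ⟨2 ^ p + p, by positivity, fun x y => ⟨?_, ?_⟩⟩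
  · linarith [rpow_norm_add_mul_inner_le_rpow_norm_add hp1.le x y]
  rcases le_total ‖y‖ ‖x‖ with hyx | hxy
  · have hC : p / 2 ≤ 2 ^ p + p := by linarith [rpow_nonneg zero_le_two p]
    calc _ ≤ p / 2 * ‖y‖ ^ p := rpow_norm_add_sub_le_of_norm_le (by linarith) hp2 hyx
      _ ≤ (2 ^ p + p) * ‖y‖ ^ p := by gcongr
  · exact rpow_norm_add_sub_le_of_le_norm hp1.le hxy

/-- For `1 < p ≤ 2` there is `C = C_p` with
`0 ≤ ‖x+y‖^p - ‖x‖^p - p‖x‖^(p-2)⟪x,y⟫ ≤ C‖y‖^p` for all `x, y ∈ ℝ^N`.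
(Note `‖x‖^(p-2) = 0` when `x = 0` since `0^(p-2) = 0` for `p < 2`, and the inner
product vanishes at `x = 0` anyway.) -/
theorem stmt_6 (N : ℕ) (hN : 0 < N) (p : ℝ) (hp1 : 1 < p) (hp2 : p ≤ 2) :
    ∃ C : ℝ, 0 < C ∧ ∀ x y : EuclideanSpace ℝ (Fin N),
      0 ≤ ‖x + y‖ ^ p - ‖x‖ ^ p - p * ‖x‖ ^ (p - 2) * (inner ℝ x y : ℝ) ∧
      ‖x + y‖ ^ p - ‖x‖ ^ p - p * ‖x‖ ^ (p - 2) * (inner ℝ x y : ℝ) ≤ C * ‖y‖ ^ p :=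
  stmt_6_general N p hp1 hp2
end

section
/- For 1 < p ≤ 2 there is a constant C = C_p such that for all vectors x, y, z ∈ ℝ^N: | |x+y|^p - p|x|^{p-2}⟨x,y⟩ - |x+z|^p + p|x|^{p-2}⟨x,z⟩ | ≤ C(|y|^{p-1} + |z|^{p-1})|y - z|. -/
/-!
Write `J w = ‖w‖ ^ (p - 2) • w` (`dualityMap`). The left-hand side is `|F y - F z|` for
`F w = ‖x + w‖ ^ p - p ‖x‖ ^ (p - 2) ⟪x, w⟫`, whose derivative at `w` is
`p ⟪J (x + w) - J x, ·⟫`. For `1 ≤ p ≤ 2` the map `J` is `(p - 1)`-Hölder with constant `2`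
in any normed space, so the derivative is bounded by `2p ‖w‖ ^ (p - 1)`, and on the segment
from `z` to `y` this is at most `2p (‖y‖ ^ (p - 1) + ‖z‖ ^ (p - 1))` because `‖·‖` is convex.
The mean value inequality gives the claim with `C = 2p`.
-/

open Real

theorem rpow_sub_two_mul_le {p d t : ℝ} (hp : p ≤ 2) (hd : 0 ≤ d) (hdt : d ≤ t) :
    t ^ (p - 2) * d ≤ d ^ (p - 1) := by
  rcases hd.eq_or_lt with rfl | hd
  · rw [mul_zero]
    positivity
  calc t ^ (p - 2) * d ≤ d ^ (p - 2) * d :=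
        mul_le_mul_of_nonneg_right (rpow_le_rpow_of_nonpos hd hdt (by linarith)) hd.le
    _ = d ^ (p - 1) := by rw [← rpow_add_one hd.ne', show p - 2 + 1 = p - 1 by ring]

theorem rpow_sub_two_sub_mul_le {p s t : ℝ} (hp1 : 1 ≤ p) (hp2 : p ≤ 2) (hs : 0 < s)
    (hst : s ≤ t) : (s ^ (p - 2) - t ^ (p - 2)) * s ≤ (t - s) ^ (p - 1) := by
  have ht : 0 < t := hs.trans_le hst
  have expand : (s ^ (p - 2) - t ^ (p - 2)) * s
      = s ^ (p - 1) - t ^ (p - 1) + t ^ (p - 2) * (t - s) := by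
    rw [show p - 1 = p - 2 + 1 by ring, rpow_add_one hs.ne', rpow_add_one ht.ne']
    ring
  have mono : s ^ (p - 1) ≤ t ^ (p - 1) := rpow_le_rpow hs.le hst (by linarith)
  linarith [rpow_sub_two_mul_le hp2 (sub_nonneg.2 hst) (sub_le_self t hs.le)]

theorem rpow_norm_le_add_of_mem_segment {E : Type*} [NormedAddCommGroup E] [NormedSpace ℝ E]
    {r : ℝ} (hr : 0 ≤ r) {y z w : E} (hw : w ∈ segment ℝ z y) :
    ‖w‖ ^ r ≤ ‖y‖ ^ r + ‖z‖ ^ r := by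
  have hmax : ‖w‖ ≤ max ‖z‖ ‖y‖ :=
    (convexOn_norm convex_univ).le_max_of_mem_segment (Set.mem_univ z) (Set.mem_univ y) hw
  calc ‖w‖ ^ r ≤ max ‖z‖ ‖y‖ ^ r := rpow_le_rpow (norm_nonneg w) hmax hr
    _ = max (‖z‖ ^ r) (‖y‖ ^ r) := rpow_max (norm_nonneg z) (norm_nonneg y) hr
    _ ≤ ‖y‖ ^ r + ‖z‖ ^ r := by
      rw [add_comm]
      exact max_le_add_of_nonneg (by positivity) (by positivity)

section DualityMap

variable {E : Type*} [NormedAddCommGroup E] [NormedSpace ℝ E] {p : ℝ}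

noncomputable def dualityMap (p : ℝ) (w : E) : E := ‖w‖ ^ (p - 2) • w

theorem norm_dualityMap_le (w : E) : ‖dualityMap p w‖ ≤ ‖w‖ ^ (p - 1) := by
  rcases eq_or_ne w 0 with rfl | hw
  · simp only [dualityMap, smul_zero, norm_zero]
    positivity
  · rw [dualityMap, norm_smul, norm_of_nonneg (by positivity),
      ← rpow_add_one (norm_ne_zero_iff.2 hw), show p - 2 + 1 = p - 1 by ring]

theorem norm_dualityMap_sub_le_of_norm_le (hp1 : 1 ≤ p) (hp2 : p ≤ 2) {a b : E}
    (hba : ‖b‖ ≤ ‖a‖) : ‖dualityMap p a - dualityMap p b‖ ≤ 2 * ‖a - b‖ ^ (p - 1) := by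
  set d := ‖a - b‖
  rcases le_or_gt ‖a‖ d with had | hda
  · calc ‖dualityMap p a - dualityMap p b‖ ≤ ‖dualityMap p a‖ + ‖dualityMap p b‖ :=
          norm_sub_le _ _
      _ ≤ d ^ (p - 1) + d ^ (p - 1) := by
          gcongr
          · exact (norm_dualityMap_le a).trans (rpow_le_rpow (norm_nonneg a) had (by linarith))
          · exact (norm_dualityMap_le b).trans
              (rpow_le_rpow (norm_nonneg b) (hba.trans had) (by linarith))
      _ = 2 * d ^ (p - 1) := by ring
  have split : dualityMap p a - dualityMap p b
      = ‖a‖ ^ (p - 2) • (a - b) + (‖a‖ ^ (p - 2) - ‖b‖ ^ (p - 2)) • b := by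
    simp only [dualityMap]
    module
  have radial : ‖‖a‖ ^ (p - 2) • (a - b)‖ ≤ d ^ (p - 1) := by
    rw [norm_smul, norm_of_nonneg (by positivity)]
    exact rpow_sub_two_mul_le hp2 (norm_nonneg _) hda.le
  have tangential : ‖(‖a‖ ^ (p - 2) - ‖b‖ ^ (p - 2)) • b‖ ≤ d ^ (p - 1) := by
    rcases eq_or_ne b 0 with rfl | hb
    · simp only [smul_zero, norm_zero]
      positivity
    have hb0 : 0 < ‖b‖ := norm_pos_iff.2 hb
    rw [norm_smul, norm_eq_abs, abs_of_nonpos (sub_nonpos.2 (rpow_le_rpow_of_nonpos hb0 hba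
      (by linarith))), neg_sub]
    calc (‖b‖ ^ (p - 2) - ‖a‖ ^ (p - 2)) * ‖b‖ ≤ (‖a‖ - ‖b‖) ^ (p - 1) :=
          rpow_sub_two_sub_mul_le hp1 hp2 hb0 hba
      _ ≤ d ^ (p - 1) := rpow_le_rpow (sub_nonneg.2 hba) (norm_sub_norm_le a b) (by linarith)
  rw [split, two_mul]
  exact (norm_add_le _ _).trans (add_le_add radial tangential)

theorem norm_dualityMap_sub_le (hp1 : 1 ≤ p) (hp2 : p ≤ 2) (a b : E) :
    ‖dualityMap p a - dualityMap p b‖ ≤ 2 * ‖a - b‖ ^ (p - 1) := by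
  rcases le_total ‖b‖ ‖a‖ with hba | hab
  · exact norm_dualityMap_sub_le_of_norm_le hp1 hp2 hba
  · rw [norm_sub_rev, norm_sub_rev a]
    exact norm_dualityMap_sub_le_of_norm_le hp1 hp2 hab

end DualityMap

section InnerProductSpace

variable {E : Type*} [NormedAddCommGroup E] [InnerProductSpace ℝ E] {p : ℝ}

theorem hasFDerivAt_norm_add_rpow_sub_inner (hp : 1 < p) (x w : E) :
    HasFDerivAt (fun v => ‖x + v‖ ^ p - p * ‖x‖ ^ (p - 2) * inner ℝ x v)
      (p • innerSL ℝ (dualityMap p (x + w) - dualityMap p x)) w := by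
  have hpow := (hasFDerivAt_norm_rpow (x + w) hp).comp w ((hasFDerivAt_id w).const_add x)
  have hlin := ((innerSL ℝ x).hasFDerivAt (x := w)).const_mul (p * ‖x‖ ^ (p - 2))
  refine (hpow.sub hlin).congr_fderiv ?_
  simp only [dualityMap, map_sub, map_smul, smul_sub, smul_smul, ContinuousLinearMap.comp_id]

theorem norm_smul_innerSL_dualityMap_sub_le (hp1 : 1 < p) (hp2 : p ≤ 2) (x w : E) :
    ‖p • innerSL ℝ (dualityMap p (x + w) - dualityMap p x)‖ ≤ 2 * p * ‖w‖ ^ (p - 1) := by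
  rw [norm_smul, innerSL_apply_norm, norm_of_nonneg (by linarith), mul_comm 2 p, mul_assoc]
  gcongr
  simpa using norm_dualityMap_sub_le hp1.le hp2 (x + w) x

end InnerProductSpace

theorem stmt_7_general (N : ℕ) (p : ℝ) (hp1 : 1 < p) (hp2 : p ≤ 2) :
    ∃ C : ℝ, 0 < C ∧ ∀ x y z : EuclideanSpace ℝ (Fin N),
      |‖x + y‖ ^ p - p * ‖x‖ ^ (p - 2) * (inner ℝ x y : ℝ)
        - ‖x + z‖ ^ p + p * ‖x‖ ^ (p - 2) * (inner ℝ x z : ℝ)|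
        ≤ C * (‖y‖ ^ (p - 1) + ‖z‖ ^ (p - 1)) * ‖y - z‖ := by
  refine ⟨2 * p, by linarith, fun x y z => ?_⟩
  have deriv_le : ∀ w ∈ segment ℝ z y,
      ‖p • innerSL ℝ (dualityMap p (x + w) - dualityMap p x)‖
        ≤ 2 * p * (‖y‖ ^ (p - 1) + ‖z‖ ^ (p - 1)) := fun w hw =>
    (norm_smul_innerSL_dualityMap_sub_le hp1 hp2 x w).trans <| by
      gcongr
      exact rpow_norm_le_add_of_mem_segment (by linarith) hw
  have mvt := (convex_segment z y).norm_image_sub_le_of_norm_hasFDerivWithin_le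
    (fun w _ => (hasFDerivAt_norm_add_rpow_sub_inner hp1 x w).hasFDerivWithinAt) deriv_le
    (left_mem_segment ℝ z y) (right_mem_segment ℝ z y)
  rw [norm_eq_abs] at mvt
  convert mvt using 2
  ring

/-- For `1 < p ≤ 2` there is `C = C_p` such that for all `x, y, z ∈ ℝ^N`:
`| ‖x+y‖^p - p‖x‖^(p-2)⟪x,y⟫ - ‖x+z‖^p + p‖x‖^(p-2)⟪x,z⟫ | ≤ C(‖y‖^(p-1)+‖z‖^(p-1))‖y-z‖`. -/
theorem stmt_7 (N : ℕ) (hN : 0 < N) (p : ℝ) (hp1 : 1 < p) (hp2 : p ≤ 2) :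
    ∃ C : ℝ, 0 < C ∧ ∀ x y z : EuclideanSpace ℝ (Fin N),
      |‖x + y‖ ^ p - p * ‖x‖ ^ (p - 2) * (inner ℝ x y : ℝ)
        - ‖x + z‖ ^ p + p * ‖x‖ ^ (p - 2) * (inner ℝ x z : ℝ)|
        ≤ C * (‖y‖ ^ (p - 1) + ‖z‖ ^ (p - 1)) * ‖y - z‖ :=
  stmt_7_general N p hp1 hp2
end

section
/- With parameters as above, the solution H of the one-dimensional problem satisfies a bound: there exists a constant C depending only on the parameters such that sup_{0<s<1} s^{σ-1}|H(s)| + sup_{s>1} s^{α-1-μ}|H(s)| ≤ C·(sup_{0<s<1} s^{σ+1}|h(s)| + sup_{s>1} s^{α+1-μ}|h(s)|). -/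
open MeasureTheory Set

set_option maxHeartbeats 1000000

/-- With `4/3 < p < 2`, `α = 1/(p-1)`, `μ = p/(2(p-1))`, `0 < σ < 1`, there is a constant `C`
(depending only on the parameters) such that whenever `h` is continuous on `(0,∞)` with
`s^(σ+1)|h(s)| ≤ K` for `0 < s < 1` and `s^(α+1-μ)|h(s)| ≤ K` for `s > 1`, the function
`H(s) = ∫₀ˢ τ h(τ) dτ + s ∫ₛ^∞ h(τ) dτ` satisfies `s^(σ-1)|H(s)| ≤ C K` for `0 < s < 1`
and `s^(α-1-μ)|H(s)| ≤ C K` for `s > 1`. -/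
theorem stmt_10 (p σ : ℝ) (hp1 : 4 / 3 < p) (hp2 : p < 2) (hσ1 : 0 < σ) (hσ2 : σ < 1)
    (α μ : ℝ) (hα : α = 1 / (p - 1)) (hμ : μ = p / (2 * (p - 1))) :
    ∃ C : ℝ, 0 < C ∧
      ∀ (h : ℝ → ℝ) (K : ℝ), ContinuousOn h (Ioi 0) →
        (∀ s : ℝ, 0 < s → s < 1 → s ^ (σ + 1) * |h s| ≤ K) →
        (∀ s : ℝ, 1 < s → s ^ (α + 1 - μ) * |h s| ≤ K) →
        ∀ H : ℝ → ℝ,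
          (∀ s : ℝ, 0 < s →
            H s = (∫ τ in (0:ℝ)..s, τ * h τ) + s * ∫ τ in Ioi s, h τ) →
          (∀ s : ℝ, 0 < s → s < 1 → s ^ (σ - 1) * |H s| ≤ C * K) ∧
          (∀ s : ℝ, 1 < s → s ^ (α - 1 - μ) * |H s| ≤ C * K) := by
  have hp0 : (0:ℝ) < p - 1 := by linarith
  have hμ1 : 1 < μ := by
    rw [hμ, lt_div_iff₀ (by linarith : (0:ℝ) < 2 * (p - 1))]; linarith
  have hμ2 : μ < 2 := by
    rw [hμ, div_lt_iff₀ (by linarith : (0:ℝ) < 2 * (p - 1))]; linarith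
  have hkey : α + 1 - μ = μ := by
    rw [hα, hμ]; field_simp; ring
  have hkey2 : α - 1 - μ = μ - 2 := by linarith
  have h1σ : (0:ℝ) < 1 - σ := by linarith
  have hμ1' : (0:ℝ) < μ - 1 := by linarith
  have hμ2' : (0:ℝ) < 2 - μ := by linarith
  have hCpos : 0 < 1/σ + 1/(1-σ) + 1/(2-μ) + 1/(μ-1) := by
    have a1 : 0 < 1/σ := by positivity
    have a2 : 0 < 1/(1-σ) := by positivity
    have a3 : 0 < 1/(2-μ) := by positivity
    have a4 : 0 < 1/(μ-1) := by positivity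
    linarith
  refine ⟨1/σ + 1/(1-σ) + 1/(2-μ) + 1/(μ-1), hCpos, ?_⟩
  intro h K hcont hb1 hb2 H hH
  have hK : 0 ≤ K := le_trans (by positivity) (hb1 (1/2) (by norm_num) (by norm_num))
  have hae1 : ∀ᵐ τ : ℝ ∂volume, τ ≠ (1:ℝ) := by
    have : {τ : ℝ | ¬ τ ≠ 1} = {1} := by ext x; simp
    rw [ae_iff, this]; exact measure_singleton 1
  -- pointwise bounds
  have hb1' : ∀ τ : ℝ, 0 < τ → τ < 1 → |h τ| ≤ K * τ ^ (-(σ+1)) := by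
    intro τ hτ0 hτ1
    have h2 : (0:ℝ) < τ ^ (σ+1) := Real.rpow_pos_of_pos hτ0 _
    rw [Real.rpow_neg hτ0.le, ← div_eq_mul_inv, le_div_iff₀ h2, mul_comm]
    exact hb1 τ hτ0 hτ1
  have hb2' : ∀ τ : ℝ, 1 < τ → |h τ| ≤ K * τ ^ (-μ) := by
    intro τ hτ
    have hτ0 : 0 < τ := lt_trans one_pos hτ
    have h1 := hb2 τ hτ; rw [hkey] at h1
    have h2 : (0:ℝ) < τ ^ μ := Real.rpow_pos_of_pos hτ0 _
    rw [Real.rpow_neg hτ0.le, ← div_eq_mul_inv, le_div_iff₀ h2, mul_comm]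
    exact h1
  -- the a.e. bound for τ * h τ on (0, s], s ≤ 1
  have hbound01 : ∀ s : ℝ, 0 < s → s ≤ 1 →
      ∀ᵐ τ ∂volume.restrict (Ioc 0 s), ‖τ * h τ‖ ≤ K * τ ^ (-σ) := by
    intro s hs0 hs1
    filter_upwards [ae_restrict_mem measurableSet_Ioc, ae_restrict_of_ae hae1] with τ hτ hτ1
    have hτ0 : 0 < τ := hτ.1
    have hτlt : τ < 1 := lt_of_le_of_ne (le_trans hτ.2 hs1) hτ1
    calc ‖τ * h τ‖ = τ * |h τ| := by
          rw [norm_mul, Real.norm_eq_abs, Real.norm_eq_abs, abs_of_pos hτ0]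
      _ ≤ τ * (K * τ ^ (-(σ+1))) := mul_le_mul_of_nonneg_left (hb1' τ hτ0 hτlt) hτ0.le
      _ = K * (τ ^ (1:ℝ) * τ ^ (-(σ+1))) := by rw [Real.rpow_one]; ring
      _ = K * τ ^ (-σ) := by
          rw [← Real.rpow_add hτ0, show (1:ℝ) + -(σ+1) = -σ by ring]
  -- Lemma A : interval integral from 0 to s ≤ 1
  have hA : ∀ s : ℝ, 0 < s → s ≤ 1 → |∫ τ in (0:ℝ)..s, τ * h τ| ≤ K * s ^ (1-σ) / (1-σ) := by
    intro s hs0 hs1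
    have hgi : IntervalIntegrable (fun τ => K * τ ^ (-σ)) volume 0 s :=
      (intervalIntegral.intervalIntegrable_rpow' (by linarith)).const_mul K
    have hbound : ∀ᵐ τ ∂volume.restrict (Set.uIoc 0 s), ‖τ * h τ‖ ≤ K * τ ^ (-σ) := by
      rw [uIoc_of_le hs0.le]; exact hbound01 s hs0 hs1
    have h2 := intervalIntegral.norm_integral_le_abs_of_norm_le hbound hgi
    have h3 : (∫ τ in (0:ℝ)..s, K * τ ^ (-σ)) = K * s ^ (1-σ) / (1-σ) := by
      rw [intervalIntegral.integral_const_mul,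
        integral_rpow (Or.inl (by linarith : (-1:ℝ) < -σ)),
        Real.zero_rpow (by intro hc; rw [show -σ + 1 = 1 - σ by ring] at hc; linarith),
        show -σ + 1 = 1 - σ by ring]
      ring
    rw [Real.norm_eq_abs, h3] at h2
    calc |∫ τ in (0:ℝ)..s, τ * h τ| ≤ |K * s ^ (1-σ) / (1-σ)| := h2
      _ = K * s ^ (1-σ) / (1-σ) := abs_of_nonneg (div_nonneg (by positivity) h1σ.le)
  -- Lemma B : interval integral from 1 to s > 1
  have hB : ∀ s : ℝ, 1 < s → |∫ τ in (1:ℝ)..s, τ * h τ| ≤ K * s ^ (2-μ) / (2-μ) := by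
    intro s hs
    have hgi : IntervalIntegrable (fun τ => K * τ ^ (1-μ)) volume 1 s :=
      (intervalIntegral.intervalIntegrable_rpow' (by linarith)).const_mul K
    have hbound : ∀ᵐ τ ∂volume.restrict (Set.uIoc 1 s), ‖τ * h τ‖ ≤ K * τ ^ (1-μ) := by
      rw [uIoc_of_le hs.le]
      filter_upwards [ae_restrict_mem measurableSet_Ioc] with τ hτ
      have hτ1 : 1 < τ := hτ.1
      have hτ0 : 0 < τ := lt_trans one_pos hτ1
      calc ‖τ * h τ‖ = τ * |h τ| := by
            rw [norm_mul, Real.norm_eq_abs, Real.norm_eq_abs, abs_of_pos hτ0]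
        _ ≤ τ * (K * τ ^ (-μ)) := mul_le_mul_of_nonneg_left (hb2' τ hτ1) hτ0.le
        _ = K * (τ ^ (1:ℝ) * τ ^ (-μ)) := by rw [Real.rpow_one]; ring
        _ = K * τ ^ (1-μ) := by
            rw [← Real.rpow_add hτ0, show (1:ℝ) + -μ = 1 - μ by ring]
    have h2 := intervalIntegral.norm_integral_le_abs_of_norm_le hbound hgi
    have h3 : (∫ τ in (1:ℝ)..s, K * τ ^ (1-μ)) = K * (s ^ (2-μ) - 1) / (2-μ) := by
      rw [intervalIntegral.integral_const_mul,
        integral_rpow (Or.inl (by linarith : (-1:ℝ) < 1-μ)),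
        Real.one_rpow, show 1 - μ + 1 = 2 - μ by ring]
      ring
    have hs1 : (1:ℝ) ≤ s ^ (2-μ) := by
      have := Real.rpow_le_rpow_of_exponent_le hs.le (by linarith : (0:ℝ) ≤ 2-μ)
      rwa [Real.rpow_zero] at this
    rw [Real.norm_eq_abs, h3] at h2
    calc |∫ τ in (1:ℝ)..s, τ * h τ| ≤ |K * (s ^ (2-μ) - 1) / (2-μ)| := h2
      _ = K * (s ^ (2-μ) - 1) / (2-μ) :=
          abs_of_nonneg (div_nonneg (mul_nonneg hK (by linarith)) hμ2'.le)
      _ ≤ K * s ^ (2-μ) / (2-μ) := by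
          apply (div_le_div_iff_of_pos_right hμ2').2
          nlinarith
  -- Lemma C : tail integral on (s, ∞), s ≥ 1
  have hC1 : ∀ s : ℝ, 1 ≤ s → IntegrableOn h (Ioi s) ∧
      |∫ τ in Ioi s, h τ| ≤ K * s ^ (1-μ) / (μ-1) := by
    intro s hs
    have hs0 : (0:ℝ) < s := lt_of_lt_of_le one_pos hs
    have hgi : Integrable (fun τ => K * τ ^ (-μ)) (volume.restrict (Ioi s)) :=
      (integrableOn_Ioi_rpow_of_lt (by linarith) hs0).const_mul K
    have hbound : ∀ᵐ τ ∂volume.restrict (Ioi s), ‖h τ‖ ≤ K * τ ^ (-μ) := by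
      filter_upwards [ae_restrict_mem measurableSet_Ioi] with τ hτ
      have : 1 < τ := lt_of_le_of_lt hs hτ
      simpa [Real.norm_eq_abs] using hb2' τ this
    have hmeash : AEStronglyMeasurable h (volume.restrict (Ioi s)) :=
      (hcont.mono (fun x hx => lt_of_lt_of_le hs0 (le_of_lt hx))).aestronglyMeasurable
        measurableSet_Ioi
    have hint : IntegrableOn h (Ioi s) := Integrable.mono' hgi hmeash hbound
    refine ⟨hint, ?_⟩
    have h2 := norm_integral_le_of_norm_le hgi hbound
    have h3 : (∫ τ in Ioi s, K * τ ^ (-μ)) = K * s ^ (1-μ) / (μ-1) := by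
      rw [integral_const_mul, integral_Ioi_rpow_of_lt (by linarith) hs0,
        show -μ + 1 = 1 - μ by ring]
      have e : -(s ^ (1-μ)) / (1 - μ) = s ^ (1-μ) / (μ - 1) := by
        rw [show μ - 1 = -(1 - μ) by ring, div_neg, neg_div]
      rw [e]; ring
    rw [Real.norm_eq_abs, h3] at h2
    exact h2
  -- Lemma D : integral on (s, 1], 0 < s < 1
  have hD : ∀ s : ℝ, 0 < s → s < 1 → IntegrableOn h (Ioc s 1) ∧
      |∫ τ in Ioc s 1, h τ| ≤ K * s ^ (-σ) / σ := by
    intro s hs0 hs1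
    have h0mem : (0:ℝ) ∉ uIcc s 1 := by
      rw [uIcc_of_le hs1.le]
      simp only [mem_Icc, not_and]
      intro hc; linarith
    have hgi : IntegrableOn (fun τ => K * τ ^ (-(σ+1))) (Ioc s 1) := by
      have := intervalIntegral.intervalIntegrable_rpow (r := -(σ+1)) (μ := volume)
        (a := s) (b := 1) (Or.inr h0mem)
      rw [intervalIntegrable_iff_integrableOn_Ioc_of_le hs1.le] at this
      exact this.const_mul K
    have hbound : ∀ᵐ τ ∂volume.restrict (Ioc s 1), ‖h τ‖ ≤ K * τ ^ (-(σ+1)) := by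
      filter_upwards [ae_restrict_mem measurableSet_Ioc, ae_restrict_of_ae hae1] with τ hτ hτ1
      have hτ0 : 0 < τ := lt_trans hs0 hτ.1
      have hτlt : τ < 1 := lt_of_le_of_ne hτ.2 hτ1
      simpa [Real.norm_eq_abs] using hb1' τ hτ0 hτlt
    have hmeash : AEStronglyMeasurable h (volume.restrict (Ioc s 1)) :=
      (hcont.mono (fun x hx => lt_trans hs0 hx.1)).aestronglyMeasurable measurableSet_Ioc
    have hint : IntegrableOn h (Ioc s 1) := Integrable.mono' hgi hmeash hbound
    refine ⟨hint, ?_⟩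
    have h2 := norm_integral_le_of_norm_le hgi hbound
    have h3 : (∫ τ in Ioc s 1, K * τ ^ (-(σ+1))) = K * (s ^ (-σ) - 1) / σ := by
      rw [← intervalIntegral.integral_of_le hs1.le,
        intervalIntegral.integral_const_mul,
        integral_rpow (Or.inr ⟨by intro hc; rw [neg_eq_iff_eq_neg] at hc; nlinarith [hc], h0mem⟩),
        Real.one_rpow, show -(σ+1) + 1 = -σ by ring]
      have e : (1 - s ^ (-σ)) / (-σ) = (s ^ (-σ) - 1) / σ := by
        rw [div_neg, ← neg_div, neg_sub]
      rw [e]; ring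
    rw [Real.norm_eq_abs, h3] at h2
    have hsσ : (1:ℝ) ≤ s ^ (-σ) := by
      have h4 : s ^ (-σ) * s ^ σ = 1 := by
        rw [← Real.rpow_add hs0]; norm_num
      have h5 : s ^ σ ≤ 1 := Real.rpow_le_one hs0.le hs1.le hσ1.le
      have h6 : 0 < s ^ σ := Real.rpow_pos_of_pos hs0 _
      nlinarith
    calc |∫ τ in Ioc s 1, h τ| ≤ K * (s ^ (-σ) - 1) / σ := h2
      _ ≤ K * s ^ (-σ) / σ := by
          apply (div_le_div_iff_of_pos_right hσ1).2
          nlinarith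
  -- interval integrability of τ * h τ on [0,1]
  have hf01 : IntervalIntegrable (fun τ => τ * h τ) volume 0 1 := by
    rw [intervalIntegrable_iff_integrableOn_Ioc_of_le zero_le_one]
    have hgi : IntegrableOn (fun τ => K * τ ^ (-σ)) (Ioc (0:ℝ) 1) := by
      have := (intervalIntegral.intervalIntegrable_rpow' (a := 0) (b := 1)
        (by linarith : (-1:ℝ) < -σ)).const_mul K
      rwa [intervalIntegrable_iff_integrableOn_Ioc_of_le zero_le_one] at this
    have hmeash : AEStronglyMeasurable (fun τ => τ * h τ) (volume.restrict (Ioc (0:ℝ) 1)) :=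
      ((continuousOn_id.mul (hcont.mono (fun x hx => hx.1))).aestronglyMeasurable
        measurableSet_Ioc)
    exact Integrable.mono' hgi hmeash (hbound01 1 one_pos le_rfl)
  constructor
  · -- small s
    intro s hs0 hs1
    rw [hH s hs0]
    obtain ⟨hint1, e2⟩ := hD s hs0 hs1
    obtain ⟨hint2, e3⟩ := hC1 1 le_rfl
    rw [Real.one_rpow, mul_one] at e3
    have e1 := hA s hs0 hs1.le
    have hsplit : (∫ τ in Ioi s, h τ) = (∫ τ in Ioc s 1, h τ) + ∫ τ in Ioi 1, h τ := by
      rw [← setIntegral_union (Ioc_disjoint_Ioi le_rfl) measurableSet_Ioi hint1 hint2,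
        Ioc_union_Ioi_eq_Ioi hs1.le]
    set A := ∫ τ in (0:ℝ)..s, τ * h τ with hAdef
    set B := ∫ τ in Ioc s 1, h τ with hBdef
    set D := ∫ τ in Ioi 1, h τ with hDdef
    have hsp : 0 < s ^ (σ-1) := Real.rpow_pos_of_pos hs0 _
    have habs : |A + s * (B + D)| ≤ |A| + s * |B| + s * |D| := by
      calc |A + s * (B + D)| ≤ |A| + |s * (B + D)| := abs_add_le _ _
        _ = |A| + s * |B + D| := by rw [abs_mul, abs_of_pos hs0]
        _ ≤ |A| + s * (|B| + |D|) := by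
            have := abs_add_le B D
            nlinarith
        _ = |A| + s * |B| + s * |D| := by ring
    have hstep : |A + s * (B + D)| ≤
        K * s ^ (1-σ) / (1-σ) + s * (K * s ^ (-σ) / σ) + s * (K / (μ-1)) := by
      have t2 : s * |B| ≤ s * (K * s ^ (-σ) / σ) := mul_le_mul_of_nonneg_left e2 hs0.le
      have t3 : s * |D| ≤ s * (K / (μ-1)) := mul_le_mul_of_nonneg_left e3 hs0.le
      linarith
    have hcollapse1 : s ^ (σ-1) * (K * s ^ (1-σ) / (1-σ)) = K / (1-σ) := by
      rw [show s ^ (σ-1) * (K * s ^ (1-σ) / (1-σ)) = (s ^ (σ-1) * s ^ (1-σ)) * K / (1-σ) by ring,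
        ← Real.rpow_add hs0]
      norm_num
    have hcollapse2 : s ^ (σ-1) * (s * (K * s ^ (-σ) / σ)) = K / σ := by
      rw [show s ^ (σ-1) * (s * (K * s ^ (-σ) / σ)) = (s ^ (σ-1) * s * s ^ (-σ)) * K / σ by ring,
        ← Real.rpow_add_one hs0.ne', ← Real.rpow_add hs0]
      norm_num
    have hcollapse3 : s ^ (σ-1) * (s * (K / (μ-1))) ≤ K / (μ-1) := by
      rw [show s ^ (σ-1) * (s * (K / (μ-1))) = (s ^ (σ-1) * s) * (K / (μ-1)) by ring,
        ← Real.rpow_add_one hs0.ne', show σ - 1 + 1 = σ by ring]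
      have h5 : s ^ σ ≤ 1 := Real.rpow_le_one hs0.le hs1.le hσ1.le
      have h6 : 0 ≤ K / (μ-1) := div_nonneg hK hμ1'.le
      nlinarith
    have hmain : s ^ (σ-1) * |A + s * (B + D)| ≤ K / (1-σ) + K / σ + K / (μ-1) := by
      calc s ^ (σ-1) * |A + s * (B + D)|
          ≤ s ^ (σ-1) * (K * s ^ (1-σ) / (1-σ) + s * (K * s ^ (-σ) / σ) + s * (K / (μ-1))) :=
            mul_le_mul_of_nonneg_left hstep hsp.le
        _ = s ^ (σ-1) * (K * s ^ (1-σ) / (1-σ)) + s ^ (σ-1) * (s * (K * s ^ (-σ) / σ))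
            + s ^ (σ-1) * (s * (K / (μ-1))) := by ring
        _ ≤ K / (1-σ) + K / σ + K / (μ-1) := by
            rw [hcollapse1, hcollapse2]; linarith
    rw [hsplit]
    have hfin : K / (1-σ) + K / σ + K / (μ-1) ≤ (1/σ + 1/(1-σ) + 1/(2-μ) + 1/(μ-1)) * K := by
      have h8 : 0 ≤ K / (2-μ) := div_nonneg hK hμ2'.le
      have e1 : K / (1-σ) = (1/(1-σ)) * K := by ring
      have e2 : K / σ = (1/σ) * K := by ring
      have e3 : K / (μ-1) = (1/(μ-1)) * K := by ring
      have e4 : K / (2-μ) = (1/(2-μ)) * K := by ring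
      linarith
    linarith [hmain]
  · -- large s
    intro s hs
    have hs0 : (0:ℝ) < s := lt_trans one_pos hs
    rw [hH s hs0, hkey2]
    have hf1s : IntervalIntegrable (fun τ => τ * h τ) volume 1 s := by
      apply ContinuousOn.intervalIntegrable
      apply continuousOn_id.mul
      apply hcont.mono
      rw [uIcc_of_le hs.le]
      intro x hx
      exact lt_of_lt_of_le one_pos hx.1
    have hsplitA : (∫ τ in (0:ℝ)..s, τ * h τ)
        = (∫ τ in (0:ℝ)..1, τ * h τ) + ∫ τ in (1:ℝ)..s, τ * h τ :=
      (intervalIntegral.integral_add_adjacent_intervals hf01 hf1s).symm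
    have e1 := hA 1 one_pos le_rfl
    rw [Real.one_rpow, mul_one] at e1
    have e2 := hB s hs
    obtain ⟨_, e3⟩ := hC1 s hs.le
    set A := ∫ τ in (0:ℝ)..1, τ * h τ with hAdef
    set B := ∫ τ in (1:ℝ)..s, τ * h τ with hBdef
    set D := ∫ τ in Ioi s, h τ with hDdef
    rw [hsplitA]
    have hsp : 0 < s ^ (μ-2) := Real.rpow_pos_of_pos hs0 _
    have habs : |A + B + s * D| ≤ |A| + |B| + s * |D| := by
      calc |A + B + s * D| ≤ |A + B| + |s * D| := abs_add_le _ _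
        _ ≤ |A| + |B| + |s * D| := by linarith [abs_add_le A B]
        _ = |A| + |B| + s * |D| := by rw [abs_mul, abs_of_pos hs0]
    have hstep : |A + B + s * D| ≤
        K / (1-σ) + K * s ^ (2-μ) / (2-μ) + s * (K * s ^ (1-μ) / (μ-1)) := by
      have t3 : s * |D| ≤ s * (K * s ^ (1-μ) / (μ-1)) := mul_le_mul_of_nonneg_left e3 hs0.le
      linarith
    have hcollapse1 : s ^ (μ-2) * (K / (1-σ)) ≤ K / (1-σ) := by
      have h5 : s ^ (μ-2) ≤ 1 :=
        Real.rpow_le_one_of_one_le_of_nonpos hs.le (by linarith)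
      have h6 : 0 ≤ K / (1-σ) := div_nonneg hK h1σ.le
      nlinarith
    have hcollapse2 : s ^ (μ-2) * (K * s ^ (2-μ) / (2-μ)) = K / (2-μ) := by
      rw [show s ^ (μ-2) * (K * s ^ (2-μ) / (2-μ)) = (s ^ (μ-2) * s ^ (2-μ)) * K / (2-μ) by ring,
        ← Real.rpow_add hs0]
      norm_num
    have hcollapse3 : s ^ (μ-2) * (s * (K * s ^ (1-μ) / (μ-1))) = K / (μ-1) := by
      rw [show s ^ (μ-2) * (s * (K * s ^ (1-μ) / (μ-1)))
          = (s ^ (μ-2) * s * s ^ (1-μ)) * K / (μ-1) by ring,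
        ← Real.rpow_add_one hs0.ne', ← Real.rpow_add hs0,
        show μ - 2 + 1 + (1 - μ) = 0 by ring, Real.rpow_zero, one_mul]
    have hmain : s ^ (μ-2) * |A + B + s * D| ≤ K / (1-σ) + K / (2-μ) + K / (μ-1) := by
      calc s ^ (μ-2) * |A + B + s * D|
          ≤ s ^ (μ-2) * (K / (1-σ) + K * s ^ (2-μ) / (2-μ) + s * (K * s ^ (1-μ) / (μ-1))) :=
            mul_le_mul_of_nonneg_left hstep hsp.le
        _ = s ^ (μ-2) * (K / (1-σ)) + s ^ (μ-2) * (K * s ^ (2-μ) / (2-μ))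
            + s ^ (μ-2) * (s * (K * s ^ (1-μ) / (μ-1))) := by ring
        _ ≤ K / (1-σ) + K / (2-μ) + K / (μ-1) := by
            rw [hcollapse2, hcollapse3]; linarith
    have hfin : K / (1-σ) + K / (2-μ) + K / (μ-1) ≤ (1/σ + 1/(1-σ) + 1/(2-μ) + 1/(μ-1)) * K := by
      have h8 : 0 ≤ K / σ := div_nonneg hK hσ1.le
      have e1 : K / (1-σ) = (1/(1-σ)) * K := by ring
      have e2 : K / σ = (1/σ) * K := by ring
      have e3 : K / (μ-1) = (1/(μ-1)) * K := by ring
      have e4 : K / (2-μ) = (1/(2-μ)) * K := by ring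
      linarith
    linarith [hmain]
end
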